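/- Let a ≥ 0, w > 0 be reals and let λ₀, λ₁, ..., λₙ be pairwise essentially-disjoint closed intervals in [0,∞) (any two intersect in at most a point), where λ₀ has length w (i.e., λ₀ = [c, c+w] for some c). Then Σ_{k=1}^n length([a, a+w] ∩ λ_k) ≤ w − length([a, a+w] ∩ λ₀) + length([0,a] ∩ λ₀) + (length(λ₀) − length([0, a+w] ∩ λ₀)). -/

import Mathlib

/-- Length of the intersection `[u,v] ∩ [a,b]` of two closed intervals. -/
noncomputable def interLen (u v a b : ℝ) : ℝ := max (min v b - max u a) 0

/-
Intersected with the window `[x, x + w]`, the intervals are still pairwise essentially disjoint,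
so their lengths add up to the measure of a subset of the window, hence to at most `w`. Moving the
contribution of `λ₀` to the right-hand side leaves two correction terms, both nonnegative: a
length, and `length λ₀` minus the length of a subinterval of `λ₀`.
-/

open MeasureTheory

lemma interLen_nonneg (u v a b : ℝ) : 0 ≤ interLen u v a b := le_max_right _ _

lemma interLen_le_sub {a b : ℝ} (hab : a ≤ b) (u v : ℝ) : interLen u v a b ≤ b - a :=
  max_le (by linarith [min_le_right v b, le_max_right u a]) (sub_nonneg.mpr hab)

lemma volume_Icc_inter_Icc (u v a b : ℝ) :
    volume (Set.Icc u v ∩ Set.Icc a b) = ENNReal.ofReal (interLen u v a b) := by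
  rw [Set.Icc_inter_Icc, Real.volume_Icc, interLen, ENNReal.ofReal_max, ENNReal.ofReal_zero,
    max_eq_left zero_le]

lemma sum_interLen_le {ι : Type*} (s : Finset ι) (a b : ι → ℝ)
    (hdisj : ∀ k ∈ s, ∀ m ∈ s, k ≠ m → min (b k) (b m) ≤ max (a k) (a m))
    {u v : ℝ} (huv : u ≤ v) :
    ∑ k ∈ s, interLen u v (a k) (b k) ≤ v - u := by
  set piece : ι → Set ℝ := fun k => Set.Icc u v ∩ Set.Icc (a k) (b k)
  have hnull : ∀ k ∈ s, NullMeasurableSet (piece k) volume := fun k _ =>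
    (measurableSet_Icc.inter measurableSet_Icc).nullMeasurableSet
  have hdisj' : Set.Pairwise (↑s) (Function.onFun (AEDisjoint volume) piece) := by
    intro k hk m hm hkm
    refine measure_mono_null (Set.inter_subset_inter Set.inter_subset_right Set.inter_subset_right) ?_
    rw [Set.Icc_inter_Icc, Real.volume_Icc]
    exact ENNReal.ofReal_eq_zero.mpr (sub_nonpos.mpr (hdisj k hk m hm hkm))
  rw [← ENNReal.ofReal_le_ofReal_iff (sub_nonneg.mpr huv),
    ENNReal.ofReal_sum_of_nonneg fun k _ => interLen_nonneg _ _ _ _]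
  calc ∑ k ∈ s, ENNReal.ofReal (interLen u v (a k) (b k))
      = volume (⋃ k ∈ s, piece k) := by
        simp only [piece, measure_biUnion_finset₀ hdisj' hnull, volume_Icc_inter_Icc]
    _ ≤ volume (Set.Icc u v) := measure_mono (Set.iUnion₂_subset fun _ _ => Set.inter_subset_left)
    _ = ENNReal.ofReal (v - u) := Real.volume_Icc

theorem stmt_14_general (n : ℕ) (a b : Fin (n + 1) → ℝ)
    (hab : ∀ k, a k ≤ b k)
    (hdisj : ∀ k m, k ≠ m → min (b k) (b m) ≤ max (a k) (a m))
    (x w : ℝ) (hw : 0 < w) :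
    ∑ k ∈ Finset.univ.erase (0 : Fin (n + 1)),
        interLen x (x + w) (a k) (b k) ≤
      w - interLen x (x + w) (a 0) (b 0) + interLen 0 x (a 0) (b 0) +
        ((b 0 - a 0) - interLen 0 (x + w) (a 0) (b 0)) := by
  have hwindow := sum_interLen_le Finset.univ a b (fun k _ m _ => hdisj k m)
    (le_add_of_nonneg_right hw.le) (u := x)
  rw [← Finset.sum_erase_add _ _ (Finset.mem_univ 0)] at hwindow
  linarith [interLen_nonneg 0 x (a 0) (b 0), interLen_le_sub (hab 0) 0 (x + w)]

theorem stmt_14 (n : ℕ) (a b : Fin (n + 1) → ℝ)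
    (hab : ∀ k, a k ≤ b k) (hnonneg : ∀ k, 0 ≤ a k)
    (hdisj : ∀ k m, k ≠ m → min (b k) (b m) ≤ max (a k) (a m))
    (x w c : ℝ) (hx : 0 ≤ x) (hw : 0 < w)
    (ha0 : a 0 = c) (hb0 : b 0 = c + w) :
    ∑ k ∈ Finset.univ.erase (0 : Fin (n + 1)),
        interLen x (x + w) (a k) (b k) ≤
      w - interLen x (x + w) (a 0) (b 0) + interLen 0 x (a 0) (b 0) +
        ((b 0 - a 0) - interLen 0 (x + w) (a 0) (b 0)) :=
  stmt_14_general n a b hab hdisj x w hw
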